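/- arXiv:2107.13707 — 2 statements merged into one kernel-verified Lean document; each statement's English description precedes it below -/
import Mathlib

section
/- Let M ⊆ ℝ² be a compact convex set and φ, ψ : M → ℝ² be C¹ immersions (Dφ, Dψ invertible everywhere) such that Dφ(x)ᵀDφ(x) = Dψ(x)ᵀDψ(x) for all x ∈ M (same induced metric) and φ = ψ on the topological boundary of M. Then φ = ψ on M. -/
open Metric Set Filter Matrix
open scoped RealInnerProductSpace Topology

set_option linter.unusedSectionVars false
set_option linter.unusedVariables false
set_option maxHeartbeats 1000000

section Helpers

variable {E : Type} [NormedAddCommGroup E] [InnerProductSpace ℝ E] [FiniteDimensional ℝ E]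

variable {E : Type} [NormedAddCommGroup E] [InnerProductSpace ℝ E] [FiniteDimensional ℝ E]

lemma polar4 (a b c d : E) :
    ⟪a - b, c - d⟫ = (‖a-d‖^2 + ‖b-c‖^2 - ‖a-c‖^2 - ‖b-d‖^2)/2 := by
  simp only [norm_sub_sq_real, inner_sub_left, inner_sub_right]
  ring

lemma quotlim {f : E → E} {D : E →L[ℝ] E} {x : E} (u : E) (h : HasFDerivAt f D x) :
    Tendsto (fun t : ℝ => t⁻¹ • (f (x + t • u) - f x)) (𝓝[≠] (0:ℝ)) (𝓝 (D u)) := by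
  have h1 : HasDerivAt (fun t : ℝ => x + t • u) u 0 := by
    simpa using ((hasDerivAt_id (0:ℝ)).smul_const u).const_add x
  have h2 : HasDerivAt (fun t : ℝ => f (x + t • u)) (D u) 0 := by
    have h' : HasFDerivAt f D ((fun t : ℝ => x + t • u) 0) := by simpa using h
    exact h'.comp_hasDerivAt 0 h1
  have h3 := hasDerivAt_iff_tendsto_slope.1 h2
  refine h3.congr (fun t => ?_)
  simp [slope]

lemma inner_of_dist {Φ Ψ : E → E} (hΦ : Differentiable ℝ Φ) (hΨ : Differentiable ℝ Ψ)
    {x₀ : E} {ε : ℝ}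
    (hdist : ∀ x ∈ ball x₀ ε, ∀ y ∈ ball x₀ ε, ‖Ψ x - Ψ y‖ = ‖Φ x - Φ y‖)
    {x y : E} (hx : x ∈ ball x₀ ε) (hy : y ∈ ball x₀ ε) (u w : E) :
    ⟪fderiv ℝ Ψ x u, fderiv ℝ Ψ y w⟫ = ⟪fderiv ℝ Φ x u, fderiv ℝ Φ y w⟫ := by
  have hxq := quotlim u (hΨ x).hasFDerivAt
  have hyq := quotlim w (hΨ y).hasFDerivAt
  have hxq' := quotlim u (hΦ x).hasFDerivAt
  have hyq' := quotlim w (hΦ y).hasFDerivAt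
  have t1 : Tendsto (fun t : ℝ => ⟪t⁻¹ • (Ψ (x + t • u) - Ψ x), t⁻¹ • (Ψ (y + t • w) - Ψ y)⟫)
      (𝓝[≠] (0:ℝ)) (𝓝 ⟪fderiv ℝ Ψ x u, fderiv ℝ Ψ y w⟫) := hxq.inner hyq
  have t2 : Tendsto (fun t : ℝ => ⟪t⁻¹ • (Φ (x + t • u) - Φ x), t⁻¹ • (Φ (y + t • w) - Φ y)⟫)
      (𝓝[≠] (0:ℝ)) (𝓝 ⟪fderiv ℝ Φ x u, fderiv ℝ Φ y w⟫) := hxq'.inner hyq'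
  have hmem : ∀ᶠ t : ℝ in 𝓝[≠] (0:ℝ), x + t • u ∈ ball x₀ ε ∧ y + t • w ∈ ball x₀ ε := by
    have c1 : Tendsto (fun t : ℝ => x + t • u) (𝓝 0) (𝓝 x) := by
      have : Continuous (fun t : ℝ => x + t • u) :=
        continuous_const.add (continuous_id.smul continuous_const)
      have h0 := this.continuousAt (x := (0:ℝ))
      unfold ContinuousAt at h0
      simpa using h0
    have c2 : Tendsto (fun t : ℝ => y + t • w) (𝓝 0) (𝓝 y) := by
      have : Continuous (fun t : ℝ => y + t • w) :=
        continuous_const.add (continuous_id.smul continuous_const)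
      have h0 := this.continuousAt (x := (0:ℝ))
      unfold ContinuousAt at h0
      simpa using h0
    have e1 := c1.eventually (isOpen_ball.eventually_mem hx)
    have e2 := c2.eventually (isOpen_ball.eventually_mem hy)
    exact nhdsWithin_le_nhds (e1.and e2)
  have heq : (fun t : ℝ => ⟪t⁻¹ • (Ψ (x + t • u) - Ψ x), t⁻¹ • (Ψ (y + t • w) - Ψ y)⟫)
      =ᶠ[𝓝[≠] (0:ℝ)]
      (fun t : ℝ => ⟪t⁻¹ • (Φ (x + t • u) - Φ x), t⁻¹ • (Φ (y + t • w) - Φ y)⟫) := by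
    filter_upwards [hmem] with t ht
    obtain ⟨hmx, hmy⟩ := ht
    rw [real_inner_smul_left, real_inner_smul_left, real_inner_smul_right,
      real_inner_smul_right, polar4, polar4,
      hdist _ hmx _ hmy, hdist _ hmx _ hy, hdist _ hx _ hmy, hdist _ hx _ hy]
  exact tendsto_nhds_unique (t1.congr' heq) t2

/-- Propagate a local symmetric/transitive relation along a preconnected open set. -/
lemma rel_global {X : Type} [TopologicalSpace X] (V : Set X) (hconn : IsPreconnected V)
    (R : X → X → Prop)
    (htrans : ∀ x, ∀ y ∈ V, ∀ z, R x y → R y z → R x z)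
    (hloc : ∀ x ∈ V, ∃ U, IsOpen U ∧ x ∈ U ∧ U ⊆ V ∧ ∀ y ∈ U, ∀ z ∈ U, R y z)
    {x y : X} (hx : x ∈ V) (hy : y ∈ V) : R x y := by
  classical
  set A : Set X := {z | ∃ U, IsOpen U ∧ z ∈ U ∧ U ⊆ V ∧ (∀ a ∈ U, ∀ b ∈ U, R a b) ∧ R x z}
    with hA
  set B : Set X := {z | ∃ U, IsOpen U ∧ z ∈ U ∧ U ⊆ V ∧ (∀ a ∈ U, ∀ b ∈ U, R a b) ∧ ¬ R x z}
    with hB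
  have hAopen : IsOpen A := by
    refine isOpen_iff_mem_nhds.2 (fun z hz => ?_)
    obtain ⟨U, hUo, hzU, hUV, hUR, hRz⟩ := hz
    refine Filter.mem_of_superset (hUo.mem_nhds hzU) (fun z' hz' => ?_)
    exact ⟨U, hUo, hz', hUV, hUR, htrans x z (hUV hzU) z' hRz (hUR z hzU z' hz')⟩
  have hBopen : IsOpen B := by
    refine isOpen_iff_mem_nhds.2 (fun z hz => ?_)
    obtain ⟨U, hUo, hzU, hUV, hUR, hRz⟩ := hz
    refine Filter.mem_of_superset (hUo.mem_nhds hzU) (fun z' hz' => ?_)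
    refine ⟨U, hUo, hz', hUV, hUR, fun hc => hRz ?_⟩
    exact htrans x z' (hUV hz') z hc (hUR z' hz' z hzU)
  have hVAB : V ⊆ A ∪ B := by
    intro z hz
    obtain ⟨U, hUo, hzU, hUV, hUR⟩ := hloc z hz
    by_cases hRz : R x z
    · exact Or.inl ⟨U, hUo, hzU, hUV, hUR, hRz⟩
    · exact Or.inr ⟨U, hUo, hzU, hUV, hUR, hRz⟩
  have hxA : x ∈ A := by
    obtain ⟨U, hUo, hxU, hUV, hUR⟩ := hloc x hx
    exact ⟨U, hUo, hxU, hUV, hUR, hUR x hxU x hxU⟩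
  by_contra hRxy
  have hyB : y ∈ B := by
    rcases hVAB hy with h | h
    · obtain ⟨_, _, _, _, _, hR⟩ := h
      exact absurd hR hRxy
    · exact h
  obtain ⟨z, hzV, hzA, hzB⟩ := hconn A B hAopen hBopen hVAB ⟨x, hx, hxA⟩ ⟨y, hy, hyB⟩
  obtain ⟨_, _, _, _, _, h1⟩ := hzA
  obtain ⟨_, _, _, _, _, h2⟩ := hzB
  exact h2 h1

noncomputable def toCLEquiv (A : E →L[ℝ] E) (h : Function.Bijective A) : E ≃L[ℝ] E :=
  (LinearEquiv.ofBijective A.toLinearMap h).toContinuousLinearEquiv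

lemma coe_toCLEquiv (A : E →L[ℝ] E) (h : Function.Bijective A) :
    ((toCLEquiv A h : E ≃L[ℝ] E) : E →L[ℝ] E) = A := by
  ext v; rfl

lemma coe_toCLEquiv' (A : E →L[ℝ] E) (h : Function.Bijective A) (v : E) :
    (toCLEquiv A h) v = A v := rfl

lemma half (V : Set E) (hV : IsOpen V) (Φ Ψ : E → E) (hΦ : ContDiff ℝ 1 Φ) (hΨ : ContDiff ℝ 1 Ψ)
    (himm : ∀ x ∈ V, Function.Bijective (fderiv ℝ Φ x))
    (hnorm : ∀ x ∈ V, ∀ w, ‖fderiv ℝ Ψ x w‖ = ‖fderiv ℝ Φ x w‖)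
    {x₀ : E} (hx₀ : x₀ ∈ V) :
    ∃ ε > 0, ball x₀ ε ⊆ V ∧ ∀ x ∈ ball x₀ ε, ∀ y ∈ ball x₀ ε,
      ‖Ψ x - Ψ y‖ ≤ ‖Φ x - Φ y‖ := by
  have hΦd : Differentiable ℝ Φ := hΦ.differentiable one_ne_zero
  have hΨd : Differentiable ℝ Ψ := hΨ.differentiable one_ne_zero
  set eqv : E ≃L[ℝ] E := toCLEquiv _ (himm x₀ hx₀) with heqv
  have hstrict : HasStrictFDerivAt Φ (eqv : E →L[ℝ] E) x₀ := by
    rw [coe_toCLEquiv]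
    exact hΦ.contDiffAt.hasStrictFDerivAt one_ne_zero
  set P := hstrict.toOpenPartialHomeomorph Φ with hP
  have hPcoe : (P : E → E) = Φ := hstrict.toOpenPartialHomeomorph_coe
  have hx₀s : x₀ ∈ P.source := hstrict.mem_toOpenPartialHomeomorph_source
  have hO : IsOpen (P.target ∩ P.symm ⁻¹' (V ∩ P.source)) :=
    P.symm.isOpen_inter_preimage (hV.inter P.open_source)
  have hΦx₀O : Φ x₀ ∈ P.target ∩ P.symm ⁻¹' (V ∩ P.source) := by
    constructor
    · rw [← hPcoe]; exact P.map_source hx₀s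
    · have : P.symm (P x₀) = x₀ := P.left_inv hx₀s
      rw [← hPcoe]
      simp only [mem_preimage, this]
      exact ⟨hx₀, hx₀s⟩
  obtain ⟨δ, hδ0, hδ⟩ := Metric.isOpen_iff.1 hO _ hΦx₀O
  -- useful inverse rewriting
  have hinv : ∀ x (h : Function.Bijective (fderiv ℝ Φ x)),
      ContinuousLinearMap.inverse (fderiv ℝ Φ x) = ((toCLEquiv _ h).symm : E →L[ℝ] E) := by
    intro x h
    rw [← ContinuousLinearMap.inverse_equiv (toCLEquiv _ h), coe_toCLEquiv]
  -- Lipschitz bound for Ψ ∘ P.symm on ball (Φ x₀) δ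
  have hlip : ∀ a ∈ ball (Φ x₀) δ, ∀ b ∈ ball (Φ x₀) δ,
      ‖Ψ (P.symm a) - Ψ (P.symm b)‖ ≤ 1 * ‖a - b‖ := by
    have hder : ∀ y ∈ ball (Φ x₀) δ, HasFDerivWithinAt (fun z => Ψ (P.symm z))
        ((fderiv ℝ Ψ (P.symm y)).comp (ContinuousLinearMap.inverse (fderiv ℝ Φ (P.symm y))))
        (ball (Φ x₀) δ) y := by
      intro y hy
      obtain ⟨hyt, hyV, hys⟩ : y ∈ P.target ∧ P.symm y ∈ V ∧ P.symm y ∈ P.source := by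
        have := hδ hy; exact ⟨this.1, this.2.1, this.2.2⟩
      have hΦder : HasFDerivAt Φ
          ((toCLEquiv _ (himm (P.symm y) hyV) : E ≃L[ℝ] E) : E →L[ℝ] E) (P.symm y) := by
        rw [coe_toCLEquiv]; exact (hΦd (P.symm y)).hasFDerivAt
      have hsymm : HasFDerivAt P.symm
          (((toCLEquiv _ (himm (P.symm y) hyV)).symm : E ≃L[ℝ] E) : E →L[ℝ] E) y := by
        refine P.hasFDerivAt_symm hyt ?_
        rw [hPcoe]; exact hΦder
      rw [hinv _ (himm (P.symm y) hyV)]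
      exact (((hΨd (P.symm y)).hasFDerivAt).comp y hsymm).hasFDerivWithinAt
    have hbound : ∀ y ∈ ball (Φ x₀) δ,
        ‖(fderiv ℝ Ψ (P.symm y)).comp
          (ContinuousLinearMap.inverse (fderiv ℝ Φ (P.symm y)))‖ ≤ 1 := by
      intro y hy
      have hyV : P.symm y ∈ V := (hδ hy).2.1
      rw [hinv _ (himm (P.symm y) hyV)]
      refine ContinuousLinearMap.opNorm_le_bound _ zero_le_one (fun v => ?_)
      have h1 := hnorm (P.symm y) hyV ((toCLEquiv _ (himm (P.symm y) hyV)).symm v)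
      have h2 : fderiv ℝ Φ (P.symm y) ((toCLEquiv _ (himm (P.symm y) hyV)).symm v) = v := by
        conv_lhs => rw [← coe_toCLEquiv' _ (himm (P.symm y) hyV)]
        exact (toCLEquiv _ (himm (P.symm y) hyV)).apply_symm_apply v
      simp only [ContinuousLinearMap.coe_comp', Function.comp_apply, one_mul,
        ContinuousLinearEquiv.coe_coe]
      rw [h1, h2]
    intro a ha b hb
    exact (convex_ball _ _).norm_image_sub_le_of_norm_hasFDerivWithin_le
      (fun y hy => hder y hy) (fun y hy => hbound y hy) hb ha
  -- choose ε
  have hWopen : IsOpen (V ∩ P.source ∩ Φ ⁻¹' ball (Φ x₀) δ) :=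
    (hV.inter P.open_source).inter (isOpen_ball.preimage hΦ.continuous)
  have hx₀W : x₀ ∈ V ∩ P.source ∩ Φ ⁻¹' ball (Φ x₀) δ :=
    ⟨⟨hx₀, hx₀s⟩, by simp [hδ0]⟩
  obtain ⟨ε, hε0, hε⟩ := Metric.isOpen_iff.1 hWopen _ hx₀W
  refine ⟨ε, hε0, fun z hz => (hε hz).1.1, fun x hx y hy => ?_⟩
  have hxW := hε hx
  have hyW := hε hy
  have hxinv : P.symm (Φ x) = x := by
    conv_lhs => rw [← hPcoe]
    exact P.left_inv hxW.1.2
  have hyinv : P.symm (Φ y) = y := by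
    conv_lhs => rw [← hPcoe]
    exact P.left_inv hyW.1.2
  have := hlip (Φ x) hxW.2 (Φ y) hyW.2
  rwa [hxinv, hyinv, one_mul] at this

end Helpers

section MatKey
lemma matkey {A B : (Fin 2 → ℝ) →L[ℝ] (Fin 2 → ℝ)}
    (h : (LinearMap.toMatrix' A.toLinearMap)ᵀ * LinearMap.toMatrix' A.toLinearMap =
      (LinearMap.toMatrix' B.toLinearMap)ᵀ * LinearMap.toMatrix' B.toLinearMap)
    (u v : Fin 2 → ℝ) : ∑ i, A u i * A v i = ∑ i, B u i * B v i := by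
  set MA := LinearMap.toMatrix' A.toLinearMap with hMA
  set MB := LinearMap.toMatrix' B.toLinearMap with hMB
  have hA : ∀ w, A w = MA *ᵥ w := fun w => by
    rw [hMA, ← Matrix.toLin'_apply, Matrix.toLin'_toMatrix']; rfl
  have hB : ∀ w, B w = MB *ᵥ w := fun w => by
    rw [hMB, ← Matrix.toLin'_apply, Matrix.toLin'_toMatrix']; rfl
  have h00 := congrFun (congrFun h 0) 0
  have h01 := congrFun (congrFun h 0) 1
  have h10 := congrFun (congrFun h 1) 0
  have h11 := congrFun (congrFun h 1) 1
  simp only [Matrix.mul_apply, Matrix.transpose_apply, Fin.sum_univ_two] at h00 h01 h10 h11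
  simp only [hA, hB, Matrix.mulVec, dotProduct, Fin.sum_univ_two]
  linear_combination (u 0 * v 0) * h00 + (u 0 * v 1) * h01 + (u 1 * v 0) * h10 +
    (u 1 * v 1) * h11
end MatKey

/-- Two C¹ immersions of a compact convex M ⊆ ℝ² with the same induced metric
DφᵀDφ = DψᵀDψ agreeing on the boundary agree on M. -/
theorem stmt_9 (M : Set (Fin 2 → ℝ)) (hMc : IsCompact M) (hconv : Convex ℝ M)
    (hint : (interior M).Nonempty) (φ ψ : (Fin 2 → ℝ) → (Fin 2 → ℝ))
    (hφ : ContDiff ℝ 1 φ) (hψ : ContDiff ℝ 1 ψ)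
    (himmφ : ∀ x ∈ M, Function.Bijective (fderiv ℝ φ x))
    (himmψ : ∀ x ∈ M, Function.Bijective (fderiv ℝ ψ x))
    (hmetric : ∀ x ∈ M,
      (LinearMap.toMatrix' (fderiv ℝ φ x).toLinearMap)ᵀ *
        LinearMap.toMatrix' (fderiv ℝ φ x).toLinearMap =
      (LinearMap.toMatrix' (fderiv ℝ ψ x).toLinearMap)ᵀ *
        LinearMap.toMatrix' (fderiv ℝ ψ x).toLinearMap)
    (hbd : Set.EqOn φ ψ (frontier M)) :
    Set.EqOn φ ψ M := by
  classical
  set e : EuclideanSpace ℝ (Fin 2) ≃L[ℝ] (Fin 2 → ℝ) := EuclideanSpace.equiv (Fin 2) ℝ with he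
  set EE := EuclideanSpace ℝ (Fin 2)
  set Φ : EE → EE := fun x => e.symm (φ (e x)) with hΦdef
  set Ψ : EE → EE := fun x => e.symm (ψ (e x)) with hΨdef
  set M' : Set EE := ⇑e ⁻¹' M with hM'def
  have hΦC : ContDiff ℝ 1 Φ := (e.symm.contDiff.comp hφ).comp e.contDiff
  have hΨC : ContDiff ℝ 1 Ψ := (e.symm.contDiff.comp hψ).comp e.contDiff
  have hΦd := hΦC.differentiable one_ne_zero
  have hΨd := hΨC.differentiable one_ne_zero
  have hfdΦ : ∀ x : EE, fderiv ℝ Φ x =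
      ((e.symm : (Fin 2 → ℝ) →L[ℝ] EE).comp (fderiv ℝ φ (e x))).comp
        (e : EE →L[ℝ] (Fin 2 → ℝ)) := by
    intro x
    have h1 : Φ = (⇑e.symm ∘ φ) ∘ ⇑e := rfl
    rw [h1, e.comp_right_fderiv, e.symm.comp_fderiv]
  have hfdΨ : ∀ x : EE, fderiv ℝ Ψ x =
      ((e.symm : (Fin 2 → ℝ) →L[ℝ] EE).comp (fderiv ℝ ψ (e x))).comp
        (e : EE →L[ℝ] (Fin 2 → ℝ)) := by
    intro x
    have h1 : Ψ = (⇑e.symm ∘ ψ) ∘ ⇑e := rfl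
    rw [h1, e.comp_right_fderiv, e.symm.comp_fderiv]
  have hfdΦp : ∀ (x v : EE), (fderiv ℝ Φ x) v = e.symm (fderiv ℝ φ (e x) (e v)) := by
    intro x v; rw [hfdΦ]; rfl
  have hfdΨp : ∀ (x v : EE), (fderiv ℝ Ψ x) v = e.symm (fderiv ℝ ψ (e x) (e v)) := by
    intro x v; rw [hfdΨ]; rfl
  have hM'c : IsCompact M' := e.toHomeomorph.isCompact_preimage.2 hMc
  have hM'cl : IsClosed M' := hM'c.isClosed
  have hM'conv : Convex ℝ M' :=
    hconv.is_linear_preimage ⟨fun a b => map_add e a b, fun c a => map_smul e c a⟩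
  have hIntM' : interior M' = ⇑e ⁻¹' interior M := (e.toHomeomorph.preimage_interior M).symm
  have hFrM' : frontier M' = ⇑e ⁻¹' frontier M := (e.toHomeomorph.preimage_frontier M).symm
  set V : Set EE := interior M' with hVdef
  have hVsub : V ⊆ M' := interior_subset
  have hVopen : IsOpen V := isOpen_interior
  have himmΦ : ∀ x ∈ M', Function.Bijective (fderiv ℝ Φ x) := by
    intro x hx
    have hfun : ⇑(fderiv ℝ Φ x) = ⇑e.symm ∘ ⇑(fderiv ℝ φ (e x)) ∘ ⇑e := funext (hfdΦp x)
    rw [hfun]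
    exact (e.symm.bijective.comp (himmφ _ hx)).comp e.bijective
  have himmΨ : ∀ x ∈ M', Function.Bijective (fderiv ℝ Ψ x) := by
    intro x hx
    have hfun : ⇑(fderiv ℝ Ψ x) = ⇑e.symm ∘ ⇑(fderiv ℝ ψ (e x)) ∘ ⇑e := funext (hfdΨp x)
    rw [hfun]
    exact (e.symm.bijective.comp (himmψ _ hx)).comp e.bijective
  -- inner products of images under the two differentials agree
  have hinn : ∀ x ∈ M', ∀ v w : EE,
      ⟪fderiv ℝ Ψ x v, fderiv ℝ Ψ x w⟫ = ⟪fderiv ℝ Φ x v, fderiv ℝ Φ x w⟫ := by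
    intro x hx v w
    rw [hfdΦp, hfdΦp, hfdΨp, hfdΨp]
    have hm := matkey (hmetric (e x) hx) (e v) (e w)
    have h1 : ∀ (a b : Fin 2 → ℝ), (⟪e.symm a, e.symm b⟫ : ℝ) = ∑ i, a i * b i := by
      intro a b
      simp [PiLp.inner_apply, RCLike.inner_apply, conj_trivial]
      rw [mul_comm (a 0), mul_comm (a 1)]; rfl
    rw [h1, h1]
    exact (hm).symm
  have hne : ∀ x ∈ M', ∀ w : EE, ‖fderiv ℝ Ψ x w‖ = ‖fderiv ℝ Φ x w‖ := by
    intro x hx w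
    rw [norm_eq_sqrt_real_inner, norm_eq_sqrt_real_inner, hinn x hx w w]
  -- the relation
  set R : EE → EE → Prop := fun x y => ∀ v w : EE,
    fderiv ℝ Φ x v = fderiv ℝ Φ y w → fderiv ℝ Ψ x v = fderiv ℝ Ψ y w with hRdef
  have hloc : ∀ x ∈ V, ∃ U, IsOpen U ∧ x ∈ U ∧ U ⊆ V ∧ ∀ a ∈ U, ∀ b ∈ U, R a b := by
    intro x hx
    obtain ⟨ε₁, hε₁0, hb₁, h₁⟩ := half V hVopen Φ Ψ hΦC hΨC
      (fun z hz => himmΦ z (hVsub hz)) (fun z hz w => hne z (hVsub hz) w) hx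
    obtain ⟨ε₂, hε₂0, hb₂, h₂⟩ := half V hVopen Ψ Φ hΨC hΦC
      (fun z hz => himmΨ z (hVsub hz)) (fun z hz w => (hne z (hVsub hz) w).symm) hx
    refine ⟨ball x (min ε₁ ε₂), isOpen_ball, mem_ball_self (lt_min hε₁0 hε₂0),
      (ball_subset_ball (min_le_left _ _)).trans hb₁, ?_⟩
    have hdist : ∀ a ∈ ball x (min ε₁ ε₂), ∀ b ∈ ball x (min ε₁ ε₂),
        ‖Ψ a - Ψ b‖ = ‖Φ a - Φ b‖ := by
      intro a ha b hb
      have ha1 := ball_subset_ball (min_le_left ε₁ ε₂) ha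
      have hb1 := ball_subset_ball (min_le_left ε₁ ε₂) hb
      have ha2 := ball_subset_ball (min_le_right ε₁ ε₂) ha
      have hb2 := ball_subset_ball (min_le_right ε₁ ε₂) hb
      exact le_antisymm (h₁ a ha1 b hb1) (h₂ a ha2 b hb2)
    intro a ha b hb v w hvw
    have key := fun {p q} hp hq u₁ u₂ => inner_of_dist hΦd hΨd hdist (x := p) (y := q) hp hq u₁ u₂
    have h1 : ⟪fderiv ℝ Ψ a v - fderiv ℝ Ψ b w, fderiv ℝ Ψ a v - fderiv ℝ Ψ b w⟫ = (0:ℝ) := by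
      rw [inner_sub_left, inner_sub_right, inner_sub_right]
      rw [key ha ha v v, key ha hb v w, key hb ha w v, key hb hb w w, hvw]
      ring
    have h2 := inner_self_eq_zero.1 h1
    exact sub_eq_zero.1 h2
  have htrans : ∀ x, ∀ y ∈ V, ∀ z, R x y → R y z → R x z := by
    intro x y hy z hxy hyz v w hvw
    obtain ⟨u, hu⟩ := (himmΦ y (hVsub hy)).2 (fderiv ℝ Φ x v)
    exact (hxy v u hu.symm).trans (hyz u w (hu.trans hvw))
  -- global relation
  obtain ⟨p₀, hp₀M⟩ := hint
  have hx₀ : (⇑e.symm p₀ : EE) ∈ V := by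
    have h1 : (⇑e.symm p₀ : EE) ∈ ⇑e ⁻¹' interior M := by
      simp only [mem_preimage, ContinuousLinearEquiv.apply_symm_apply]
      exact hp₀M
    rwa [← hIntM'] at h1
  set x₀ : EE := e.symm p₀
  have hRall : ∀ x ∈ V, R x₀ x := fun x hx =>
    rel_global V (hM'conv.interior).isPreconnected R htrans hloc hx₀ hx
  -- the rigid motion
  set eqv₀ : EE ≃L[ℝ] EE := toCLEquiv _ (himmΦ x₀ (hVsub hx₀)) with heqv₀
  set Q : EE →L[ℝ] EE := (fderiv ℝ Ψ x₀).comp (eqv₀.symm : EE →L[ℝ] EE) with hQdef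
  have hQap : ∀ x ∈ V, ∀ w : EE, fderiv ℝ Ψ x w = Q (fderiv ℝ Φ x w) := by
    intro x hx w
    have h0 : fderiv ℝ Φ x₀ (eqv₀.symm (fderiv ℝ Φ x w)) = fderiv ℝ Φ x w := by
      conv_lhs => rw [← coe_toCLEquiv' _ (himmΦ x₀ (hVsub hx₀))]
      exact eqv₀.apply_symm_apply _
    have := hRall x hx (eqv₀.symm (fderiv ℝ Φ x w)) w h0
    exact this.symm
  have hQinner : ∀ a b : EE, ⟪Q a, Q b⟫ = ⟪a, b⟫ := by
    intro a b
    have h0 : ∀ c : EE, fderiv ℝ Φ x₀ (eqv₀.symm c) = c := by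
      intro c
      conv_lhs => rw [← coe_toCLEquiv' _ (himmΦ x₀ (hVsub hx₀))]
      exact eqv₀.apply_symm_apply _
    have := hinn x₀ (hVsub hx₀) (eqv₀.symm a) (eqv₀.symm b)
    rw [h0, h0] at this
    exact this
  -- F := Ψ - Q ∘ Φ is constant on M'
  set F : EE → EE := fun x => Ψ x - Q (Φ x) with hFdef
  have hFder : ∀ x ∈ V, HasFDerivWithinAt F (0 : EE →L[ℝ] EE) V x := by
    intro x hx
    have h1 : HasFDerivAt F (fderiv ℝ Ψ x - Q.comp (fderiv ℝ Φ x)) x :=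
      (hΨd x).hasFDerivAt.sub (Q.hasFDerivAt.comp x (hΦd x).hasFDerivAt)
    have h2 : fderiv ℝ Ψ x - Q.comp (fderiv ℝ Φ x) = 0 := by
      ext w
      simp [hQap x hx w]
    rw [h2] at h1
    exact h1.hasFDerivWithinAt
  have hFconstV : ∀ x ∈ V, F x = F x₀ := by
    intro x hx
    have h1 := (hM'conv.interior).norm_image_sub_le_of_norm_hasFDerivWithin_le (C := 0)
      hFder (fun y _ => by simp) hx₀ hx
    rw [zero_mul] at h1
    have h2 : F x - F x₀ = 0 := by
      have := norm_le_zero_iff.1 h1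
      exact this
    exact sub_eq_zero.1 h2
  have hMsubcl : M' ⊆ closure V := by
    intro z hz
    have htt : Tendsto (fun t : ℝ => (1 - t) • z + t • x₀) (𝓝[>] (0:ℝ)) (𝓝 z) := by
      have hcont : Continuous (fun t : ℝ => (1 - t) • z + t • x₀) :=
        ((continuous_const.sub continuous_id).smul continuous_const).add
          (continuous_id.smul continuous_const)
      have h0 := hcont.continuousAt (x := (0:ℝ))
      unfold ContinuousAt at h0
      simp only [sub_zero, one_smul, zero_smul, add_zero] at h0
      exact h0.mono_left nhdsWithin_le_nhds
    refine mem_closure_of_tendsto htt ?_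
    filter_upwards [Ioo_mem_nhdsGT (zero_lt_one)] with t ht
    exact hM'conv.combo_self_interior_mem_interior hz hx₀ (by linarith [ht.2]) ht.1
      (by ring)
  have hFconst : ∀ x ∈ M', F x = F x₀ := by
    have hFc : Continuous F := hΨC.continuous.sub (Q.continuous.comp hΦC.continuous)
    have heqV : EqOn F (fun _ => F x₀) V := fun x hx => hFconstV x hx
    have heq : EqOn F (fun _ => F x₀) (closure V) := heqV.closure hFc continuous_const
    exact fun x hx => heq (hMsubcl hx)
  -- boundary data
  have hbd' : ∀ z ∈ frontier M', Φ z = Ψ z := by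
    intro z hz
    rw [hFrM'] at hz
    exact congrArg e.symm (hbd hz)
  have hfrsub : frontier M' ⊆ M' := hM'cl.frontier_subset
  have hfrne : (frontier M').Nonempty := by
    by_contra hh
    rw [not_nonempty_iff_eq_empty] at hh
    haveI : PreconnectedSpace EE := ⟨(convex_univ : Convex ℝ (univ : Set EE)).isPreconnected⟩
    rcases frontier_eq_empty_iff.1 hh with h | h
    · exact absurd (h ▸ hVsub hx₀) (notMem_empty x₀)
    · exact hM'c.ne_univ h
  obtain ⟨z₁, hz₁⟩ := hfrne
  -- fixed subspace
  set K : Submodule ℝ EE := LinearMap.ker ((Q : EE →ₗ[ℝ] EE) - LinearMap.id) with hKdef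
  have hKmem : ∀ u : EE, u ∈ K ↔ Q u = u := by
    intro u
    rw [hKdef, LinearMap.mem_ker, LinearMap.sub_apply, LinearMap.id_apply, sub_eq_zero]
    rfl
  have hfix : ∀ z ∈ frontier M', Φ z - Φ z₁ ∈ K := by
    intro z hz
    rw [hKmem, map_sub]
    have h1 : Ψ z - Q (Φ z) = Ψ z₁ - Q (Φ z₁) :=
      (hFconst z (hfrsub hz)).trans (hFconst z₁ (hfrsub hz₁)).symm
    rw [← hbd' z hz, ← hbd' z₁ hz₁] at h1
    exact (sub_eq_sub_iff_sub_eq_sub.1 h1).symm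
  by_cases hK : K = ⊤
  · -- Q is the identity, and then Φ = Ψ on M'
    have hQ1 : ∀ u : EE, Q u = u := fun u => (hKmem u).1 (hK ▸ Submodule.mem_top)
    have hc0 : F z₁ = 0 := by
      show Ψ z₁ - Q (Φ z₁) = 0
      rw [hQ1, ← hbd' z₁ hz₁, sub_self]
    have hFall0 : ∀ x ∈ M', F x = 0 := fun x hx =>
      (hFconst x hx).trans ((hFconst z₁ (hfrsub hz₁)).symm.trans hc0)
    intro p hp
    have hx' : (⇑e.symm p : EE) ∈ M' := by
      simp only [hM'def, mem_preimage, ContinuousLinearEquiv.apply_symm_apply]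
      exact hp
    have h1 : Ψ (e.symm p) - Q (Φ (e.symm p)) = 0 := hFall0 _ hx'
    rw [hQ1] at h1
    have h2 : Φ (e.symm p) = Ψ (e.symm p) := (sub_eq_zero.1 h1).symm
    have h3 : e.symm (φ (e (e.symm p))) = e.symm (ψ (e (e.symm p))) := h2
    rw [ContinuousLinearEquiv.apply_symm_apply] at h3
    exact e.symm.injective h3
  · -- otherwise we contradict the immersion property via a maximum principle
    exfalso
    have hKbot : Kᗮ ≠ ⊥ := by
      intro hc
      exact hK (Submodule.orthogonal_eq_bot_iff.1 hc)
    obtain ⟨v, hvK, hv0⟩ := Submodule.exists_mem_ne_zero_of_ne_bot hKbot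
    set f : EE → ℝ := fun x => ⟪v, Φ x⟫ with hfdef
    have hfc : Continuous f := ((innerSL ℝ v).continuous).comp hΦC.continuous
    have hfder : ∀ x : EE, HasFDerivAt f ((innerSL ℝ v).comp (fderiv ℝ Φ x)) x :=
      fun x => ((innerSL ℝ v).hasFDerivAt).comp x (hΦd x).hasFDerivAt
    have hfnz : ∀ x ∈ V, ((innerSL ℝ v).comp (fderiv ℝ Φ x) : EE →L[ℝ] ℝ) ≠ 0 := by
      intro x hx hc
      obtain ⟨u, hu⟩ := (himmΦ x (hVsub hx)).2 v
      have h1 := ContinuousLinearMap.ext_iff.1 hc u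
      simp only [ContinuousLinearMap.coe_comp', Function.comp_apply, innerSL_apply_apply,
        ContinuousLinearMap.zero_apply] at h1
      rw [hu] at h1
      exact hv0 (inner_self_eq_zero.1 h1)
    have hfconst : ∀ z ∈ frontier M', f z = f z₁ := by
      intro z hz
      have h1 : Φ z - Φ z₁ ∈ K := hfix z hz
      have h2 : ⟪v, Φ z - Φ z₁⟫ = (0:ℝ) := by
        have h3 := (Submodule.mem_orthogonal K v).1 hvK _ h1
        rw [← real_inner_comm]
        exact h3
      rw [inner_sub_right] at h2
      have : f z - f z₁ = 0 := h2
      exact sub_eq_zero.1 this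
    have hMne : M'.Nonempty := ⟨x₀, hVsub hx₀⟩
    obtain ⟨xM, hxM, hmaxM⟩ := hM'c.exists_isMaxOn hMne hfc.continuousOn
    obtain ⟨xm, hxm, hminM⟩ := hM'c.exists_isMinOn hMne hfc.continuousOn
    by_cases hMint : xM ∈ V
    · have hlm : IsLocalMax f xM :=
        Filter.eventually_of_mem (Filter.mem_of_superset (hVopen.mem_nhds hMint) hVsub)
          (fun y hy => hmaxM hy)
      exact hfnz xM hMint (hlm.hasFDerivAt_eq_zero (hfder xM))
    · by_cases hmint : xm ∈ V
      · have hlm : IsLocalMin f xm :=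
          Filter.eventually_of_mem (Filter.mem_of_superset (hVopen.mem_nhds hmint) hVsub)
            (fun y hy => hminM hy)
        exact hfnz xm hmint (hlm.hasFDerivAt_eq_zero (hfder xm))
      · have hfr : ∀ y, y ∈ M' → y ∉ V → y ∈ frontier M' := by
          intro y hy hyn
          rw [hM'cl.frontier_eq]
          exact ⟨hy, hyn⟩
        have hfM : f xM = f z₁ := hfconst xM (hfr xM hxM hMint)
        have hfm : f xm = f z₁ := hfconst xm (hfr xm hxm hmint)
        have hconstf : ∀ y ∈ M', f y = f z₁ := fun y hy =>
          le_antisymm (hfM ▸ hmaxM hy) (hfm ▸ hminM hy)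
        have hev : f =ᶠ[𝓝 x₀] (fun _ => f z₁) :=
          Filter.eventually_of_mem (Filter.mem_of_superset (hVopen.mem_nhds hx₀) hVsub)
            (fun y hy => hconstf y hy)
        have h0 : HasFDerivAt f (0 : EE →L[ℝ] ℝ) x₀ :=
          (hasFDerivAt_const (f z₁) x₀).congr_of_eventuallyEq hev
        exact hfnz x₀ hx₀ (h0.unique (hfder x₀)).symm
end

section
/- Let γ : I → M be a maximal unit-speed geodesic on a compact Riemannian 2-manifold M with boundary that embeds isometrically into ℝ² (via a Euclidean isometric immersion φ with φ(M) compact). Then the domain I is a compact interval [a,b], and γ(a), γ(b) ∈ ∂M. -/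
open Set

local notation "E2" => EuclideanSpace ℝ (Fin 2)

private lemma glue_cont {f : ℝ → E2} {s t : Set ℝ} (hs : IsClosed s) (ht : IsClosed t)
    (hfs : ContinuousOn f s) (hft : ContinuousOn f t) : ContinuousOn f (s ∪ t) := by
  intro x hx
  apply ContinuousWithinAt.union
  · by_cases h : x ∈ s
    · exact hfs x h
    · exact continuousWithinAt_of_notMem_closure (by rwa [hs.closure_eq])
  · by_cases h : x ∈ t
    · exact hft x h
    · exact continuousWithinAt_of_notMem_closure (by rwa [ht.closure_eq])

private lemma aux_ext (M : Set E2) (φ : E2 → E2) (hφ : ContDiff ℝ 1 φ)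
    (x₀ : E2) (hinj : Function.Injective (fderiv ℝ φ x₀))
    (hx : x₀ ∈ interior M) (p u : E2) (c : ℝ) (hφx : φ x₀ = p + c • u) :
    ∃ δ > 0, ∃ g : ℝ → E2, ContinuousOn g (Set.Icc (c - δ) (c + δ)) ∧ g c = x₀ ∧
      ∀ t ∈ Set.Icc (c - δ) (c + δ), g t ∈ M ∧ φ (g t) = p + t • u := by
  have hdiff : HasStrictFDerivAt φ (fderiv ℝ φ x₀) x₀ :=
    hφ.contDiffAt.hasStrictFDerivAt one_ne_zero
  set f' := fderiv ℝ φ x₀ with hf'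
  have hbij : Function.Bijective f' :=
    ⟨hinj, LinearMap.injective_iff_surjective.1 hinj⟩
  let eL : E2 ≃ₗ[ℝ] E2 := LinearEquiv.ofBijective (f' : E2 →ₗ[ℝ] E2) hbij
  let eC : E2 ≃L[ℝ] E2 := eL.toContinuousLinearEquiv
  have hcoe : (eC : E2 →L[ℝ] E2) = f' := by ext v; rfl
  have hst : HasStrictFDerivAt φ ((eC : E2 ≃L[ℝ] E2) : E2 →L[ℝ] E2) x₀ := by
    rw [hcoe]; exact hdiff
  set P := HasStrictFDerivAt.toOpenPartialHomeomorph φ hst with hP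
  have hPcoe : (P : E2 → E2) = φ := rfl
  have hsrc : x₀ ∈ P.source := HasStrictFDerivAt.mem_toOpenPartialHomeomorph_source hst
  have htgt : φ x₀ ∈ P.target := HasStrictFDerivAt.image_mem_toOpenPartialHomeomorph_target hst
  set line : ℝ → E2 := fun t => p + t • u with hline
  have hlc : Continuous line := continuous_const.add (continuous_id.smul continuous_const)
  set g : ℝ → E2 := fun t => P.symm (line t) with hg
  set U : Set ℝ := line ⁻¹' P.target with hU
  have hUopen : IsOpen U := P.open_target.preimage hlc
  have hgU : ContinuousOn g U :=
    P.continuousOn_symm.comp hlc.continuousOn (fun t ht => ht)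
  set S : Set ℝ := U ∩ g ⁻¹' interior M with hS
  have hSopen : IsOpen S := hgU.isOpen_inter_preimage hUopen isOpen_interior
  have hgc : g c = x₀ := by
    have : line c = φ x₀ := hφx.symm
    rw [hg]; simp only [this]
    exact P.left_inv hsrc
  have hcS : c ∈ S := by
    refine ⟨?_, ?_⟩
    · show line c ∈ P.target
      rw [show line c = φ x₀ from hφx.symm]; exact htgt
    · show g c ∈ interior M
      rw [hgc]; exact hx
  obtain ⟨ε, hε, hball⟩ := Metric.isOpen_iff.1 hSopen c hcS
  refine ⟨ε / 2, by linarith, g, ?_, hgc, ?_⟩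
  · have hsub : Set.Icc (c - ε / 2) (c + ε / 2) ⊆ S := by
      intro t ht
      apply hball
      rw [Metric.mem_ball, Real.dist_eq, abs_lt]
      constructor <;> [linarith [ht.1]; linarith [ht.2]]
    exact hgU.mono (fun t ht => (hsub ht).1)
  · intro t ht
    have htS : t ∈ S := by
      apply hball
      rw [Metric.mem_ball, Real.dist_eq, abs_lt]
      constructor <;> [linarith [ht.1]; linarith [ht.2]]
    refine ⟨interior_subset htS.2, ?_⟩
    have := P.right_inv htS.1
    exact this

/-- A maximal unit-speed geodesic (whose φ-image is a unit-speed line segment, φ being a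
Euclidean isometric immersion of the compact domain M) is defined on a compact interval
[a,b], with its endpoints on the boundary of M. -/
theorem stmt_16 (M : Set (EuclideanSpace ℝ (Fin 2))) (hMc : IsCompact M)
    (φ : EuclideanSpace ℝ (Fin 2) → EuclideanSpace ℝ (Fin 2)) (hφ : ContDiff ℝ 1 φ)
    (hiso : ∀ x ∈ M, ∀ v w : EuclideanSpace ℝ (Fin 2),
      (inner (𝕜 := ℝ) (fderiv ℝ φ x v) (fderiv ℝ φ x w) : ℝ) = inner (𝕜 := ℝ) v w)
    (γ : ℝ → EuclideanSpace ℝ (Fin 2)) (hγ : Continuous γ)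
    (I : Set ℝ) (hIne : I.Nonempty) (hIconn : I.OrdConnected)
    (p u : EuclideanSpace ℝ (Fin 2)) (hu : ‖u‖ = 1)
    (hgeo : ∀ t ∈ I, γ t ∈ M ∧ φ (γ t) = p + t • u)
    (hmax : ∀ (I' : Set ℝ) (γ' : ℝ → EuclideanSpace ℝ (Fin 2)), I ⊆ I' →
      I'.OrdConnected → ContinuousOn γ' I' → Set.EqOn γ γ' I →
      (∀ t ∈ I', γ' t ∈ M ∧ φ (γ' t) = p + t • u) → I' = I) :
    ∃ a b : ℝ, a ≤ b ∧ I = Set.Icc a b ∧ γ a ∈ frontier M ∧ γ b ∈ frontier M := by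
  have hMclosed : IsClosed M := hMc.isClosed
  -- boundedness of I
  obtain ⟨C, hC⟩ := (hMc.image hφ.continuous).isBounded.exists_norm_le
  have hIbdd : I ⊆ Set.Icc (-(C + ‖p‖)) (C + ‖p‖) := by
    intro t ht
    obtain ⟨htM, htφ⟩ := hgeo t ht
    have h1 : ‖p + t • u‖ ≤ C := by
      rw [← htφ]; exact hC _ ⟨γ t, htM, rfl⟩
    have h2 : ‖t • u‖ ≤ C + ‖p‖ := by
      calc ‖t • u‖ = ‖(p + t • u) - p‖ := by rw [add_sub_cancel_left]
        _ ≤ ‖p + t • u‖ + ‖p‖ := norm_sub_le _ _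
        _ ≤ C + ‖p‖ := by linarith
    rw [norm_smul, hu, mul_one, Real.norm_eq_abs, abs_le] at h2
    exact ⟨h2.1, h2.2⟩
  -- closedness of I
  have hclosK : IsClosed {t : ℝ | γ t ∈ M ∧ φ (γ t) = p + t • u} := by
    apply IsClosed.inter
    · exact hMclosed.preimage hγ
    · exact isClosed_eq (hφ.continuous.comp hγ) (continuous_const.add (continuous_id.smul continuous_const))
  have hIclosed : IsClosed I := by
    have h := hmax (closure I) γ subset_closure
      ((hIconn.isPreconnected.closure).ordConnected)
      hγ.continuousOn (fun _ _ => rfl)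
      (fun t ht => closure_minimal (fun s hs => hgeo s hs) hclosK ht)
    rw [← h]; exact isClosed_closure
  have hIcomp : IsCompact I := isCompact_Icc.of_isClosed_subset hIclosed hIbdd
  set a := sInf I with ha
  set b := sSup I with hb
  have haI : a ∈ I := hIcomp.sInf_mem hIne
  have hbI : b ∈ I := hIcomp.sSup_mem hIne
  have hab : a ≤ b := csInf_le_csSup hIne hIcomp.bddBelow hIcomp.bddAbove
  have hI : I = Set.Icc a b := by
    apply Set.Subset.antisymm
    · intro t ht
      exact ⟨csInf_le hIcomp.bddBelow ht, le_csSup hIcomp.bddAbove ht⟩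
    · exact hIconn.out haI hbI
  -- injectivity of the derivative at points of M
  have hinj : ∀ x ∈ M, Function.Injective (fderiv ℝ φ x) := by
    intro x hx v w hvw
    have h0 : fderiv ℝ φ x (v - w) = 0 := by rw [map_sub, hvw, sub_self]
    have : (inner (𝕜 := ℝ) (v - w) (v - w) : ℝ) = 0 := by
      rw [← hiso x hx (v - w) (v - w), h0, inner_zero_left]
    exact sub_eq_zero.1 (inner_self_eq_zero.1 this)
  -- endpoints on the frontier
  have hfr : ∀ c ∈ ({a, b} : Set ℝ), γ c ∉ interior M := by
    intro c hc hint
    obtain ⟨δ, hδ, g, hgcont, hgc, hgprop⟩ :=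
      aux_ext M φ hφ (γ c) (hinj _ (hgeo c (by rcases hc with rfl | rfl <;> assumption)).1)
        hint p u c (hgeo c (by rcases hc with rfl | rfl <;> assumption)).2
    rcases hc with rfl | rfl
    · -- extend to the left of a
      set γ' : ℝ → EuclideanSpace ℝ (Fin 2) := fun t => if t < a then g t else γ t with hγ'
      have heq1 : Set.EqOn γ' g (Set.Icc (a - δ) a) := by
        intro t ht
        by_cases h : t < a
        · simp [hγ', h]
        · have : t = a := le_antisymm ht.2 (not_lt.1 h)
          simp [hγ', this, hgc]
      have heq2 : Set.EqOn γ' γ (Set.Icc a b) := by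
        intro t ht; simp [hγ', not_lt.2 ht.1]
      have hcont : ContinuousOn γ' (Set.Icc (a - δ) b) := by
        rw [← Set.Icc_union_Icc_eq_Icc (by linarith) hab]
        exact glue_cont isClosed_Icc isClosed_Icc
          ((hgcont.mono (Set.Icc_subset_Icc le_rfl (by linarith))).congr heq1)
          (hγ.continuousOn.congr heq2)
      have h := hmax (Set.Icc (a - δ) b) γ'
        (by rw [hI]; exact Set.Icc_subset_Icc (by linarith) le_rfl)
        Set.ordConnected_Icc hcont
        (by intro t ht; rw [hI] at ht; exact (heq2 ht).symm)
        (by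
          intro t ht
          by_cases h : t < a
          · have ht' : t ∈ Set.Icc (a - δ) (a + δ) := ⟨ht.1, by linarith⟩
            simpa [hγ', h] using hgprop t ht'
          · have : t ∈ I := by rw [hI]; exact ⟨not_lt.1 h, ht.2⟩
            simpa [hγ', h] using hgeo t this)
      have : a - δ ∈ I := by rw [← h]; exact ⟨le_rfl, by linarith⟩
      rw [hI] at this
      linarith [this.1]
    · -- extend to the right of b
      set γ' : ℝ → EuclideanSpace ℝ (Fin 2) := fun t => if b < t then g t else γ t with hγ'
      have heq1 : Set.EqOn γ' g (Set.Icc b (b + δ)) := by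
        intro t ht
        by_cases h : b < t
        · simp [hγ', h]
        · have : t = b := le_antisymm (not_lt.1 h) ht.1
          simp [hγ', this, hgc]
      have heq2 : Set.EqOn γ' γ (Set.Icc a b) := by
        intro t ht; simp [hγ', not_lt.2 ht.2]
      have hcont : ContinuousOn γ' (Set.Icc a (b + δ)) := by
        rw [← Set.Icc_union_Icc_eq_Icc hab (by linarith)]
        exact glue_cont isClosed_Icc isClosed_Icc
          (hγ.continuousOn.congr heq2)
          ((hgcont.mono (Set.Icc_subset_Icc (by linarith) le_rfl)).congr heq1)
      have h := hmax (Set.Icc a (b + δ)) γ'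
        (by rw [hI]; exact Set.Icc_subset_Icc le_rfl (by linarith))
        Set.ordConnected_Icc hcont
        (by intro t ht; rw [hI] at ht; exact (heq2 ht).symm)
        (by
          intro t ht
          by_cases h : b < t
          · have ht' : t ∈ Set.Icc (b - δ) (b + δ) := ⟨by linarith [ht.1], ht.2⟩
            simpa [hγ', h] using hgprop t ht'
          · have : t ∈ I := by rw [hI]; exact ⟨ht.1, not_lt.1 h⟩
            simpa [hγ', h] using hgeo t this)
      have : b + δ ∈ I := by rw [← h]; exact ⟨by linarith, le_rfl⟩
      rw [hI] at this
      linarith [this.2]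
  refine ⟨a, b, hab, hI, ?_, ?_⟩
  · rw [hMclosed.frontier_eq]
    exact ⟨(hgeo a haI).1, hfr a (by simp)⟩
  · rw [hMclosed.frontier_eq]
    exact ⟨(hgeo b hbI).1, hfr b (by simp)⟩
end
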